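/- Let μ be a finite complex Borel measure on ℝⁿ (n ≥ 2) with compact support. If the Fourier transform μ̂(ξ) = ∫ e^{−i ξ·x} dμ(x) vanishes for all ξ ∈ ℝⁿ \ {0} and is continuous, and μ̂(0) = μ(ℝⁿ) = 0, then μ = 0. Consequently, if ∫ u₁ u₂ dμ = 0 for all pairs u₁, u₂ of harmonic functions on ℝⁿ (allowing the harmonic exponentials e^{iζ₊·x}, e^{iζ₋·x} with ζ₊ + ζ₋ = ξ and also constants), then μ = 0. -/

import Mathlib

open MeasureTheory

/-- Partial derivative in the `j`-th coordinate direction. -/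
noncomputable def pd {m : ℕ} {E : Type*} [NormedAddCommGroup E] [NormedSpace ℝ E]
    (j : Fin m) (f : (Fin m → ℝ) → E) (x : Fin m → ℝ) : E :=
  fderiv ℝ f x (Pi.single j 1)

/-- A complex-valued function is harmonic on all of `ℝ^m`. -/
def IsHarmC {m : ℕ} (u : (Fin m → ℝ) → ℂ) : Prop :=
  ContDiff ℝ 2 u ∧ ∀ x, ∑ j, pd j (pd j u) x = 0

/-!
Fourier uniqueness for finite positive measures does the analytic work. Conjugating the hypothesis
shows that the Fourier transform of `(conj w) ν` vanishes as well, hence so do those of `(Re w) ν`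
and `(Im w) ν`; for a real density `g`, the measures `g⁺ ν` and `g⁻ ν` then have the same
characteristic function, so they coincide and `g = 0` a.e.

For the harmonic statement, pick `η ⊥ ξ` with `|η| = |ξ|` (possible as `n ≥ 2`). The vectors
`ζ± = (-iξ ± η) / 2 ∈ ℂⁿ` satisfy `ζ± · ζ± = 0`, so `x ↦ exp (ζ± · x)` are harmonic, and their
product is the character `exp (-i ξ · x)`.
-/

open Complex ComplexConjugate Finset

section FourierUniqueness

variable {E : Type*} [NormedAddCommGroup E] [NormedSpace ℝ E] [MeasurableSpace E]
  {μ : Measure E}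

lemma charFunDual_withDensity_ofReal {g : E → ℝ} (hg : Integrable g μ) (L : StrongDual ℝ E) :
    charFunDual (μ.withDensity fun x => ENNReal.ofReal (g x)) L
      = ∫ x, cexp (L x * I) * (max (g x) 0 : ℝ) ∂μ := by
  rw [charFunDual_apply, integral_withDensity_eq_integral_toReal_smul₀
    hg.aestronglyMeasurable.aemeasurable.ennreal_ofReal
    (.of_forall fun _ => ENNReal.ofReal_lt_top)]
  simp only [ENNReal.toReal_ofReal', Complex.real_smul, mul_comm]

variable [BorelSpace E]

lemma MeasureTheory.Integrable.char_mul {w : E → ℂ} (hw : Integrable w μ) (L : StrongDual ℝ E) :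
    Integrable (fun x => cexp (L x * I) * w x) μ :=
  hw.bdd_mul (by fun_prop) (.of_forall fun x => by rw [norm_exp_ofReal_mul_I])

variable [CompleteSpace E] [SecondCountableTopology E]

theorem ae_eq_zero_of_forall_integral_char_mul_ofReal_eq_zero {g : E → ℝ}
    (hg : Integrable g μ) (h : ∀ L : StrongDual ℝ E, ∫ x, cexp (L x * I) * g x ∂μ = 0) :
    g =ᵐ[μ] 0 := by
  have := isFiniteMeasure_withDensity_ofReal hg.2
  have := isFiniteMeasure_withDensity_ofReal hg.neg.2
  have hchar : charFunDual (μ.withDensity fun x => ENNReal.ofReal (g x))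
      = charFunDual (μ.withDensity fun x => ENNReal.ofReal (-g x)) := by
    ext L
    rw [charFunDual_withDensity_ofReal hg, ← sub_eq_zero,
      charFunDual_withDensity_ofReal (g := fun x => -g x) hg.neg, ← integral_sub, ← h L]
    · congr with x
      rw [← mul_sub, ← ofReal_sub, max_zero_sub_max_neg_zero_eq_self]
    · exact hg.pos_part.ofReal.char_mul L
    · exact hg.neg.pos_part.ofReal.char_mul L
  have hae := (withDensity_eq_iff hg.aestronglyMeasurable.aemeasurable.ennreal_ofReal
    hg.neg.aestronglyMeasurable.aemeasurable.ennreal_ofReal hg.lintegral_lt_top.ne).1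
    (Measure.ext_of_charFunDual hchar)
  filter_upwards [hae] with x hx
  have hmax := congrArg ENNReal.toReal hx
  simp only [ENNReal.toReal_ofReal', Pi.neg_apply] at hmax
  rw [Pi.zero_apply]
  linarith [max_zero_sub_max_neg_zero_eq_self (g x)]

theorem ae_eq_zero_of_forall_integral_char_mul_eq_zero {w : E → ℂ} (hw : Integrable w μ)
    (h : ∀ L : StrongDual ℝ E, ∫ x, cexp (L x * I) * w x ∂μ = 0) : w =ᵐ[μ] 0 := by
  have hconj : ∀ L : StrongDual ℝ E, ∫ x, cexp (L x * I) * conj (w x) ∂μ = 0 := fun L => by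
    have hx : ∀ x, cexp (L x * I) * conj (w x) = conj (cexp ((-L) x * I) * w x) := fun x => by
      simp [← exp_conj]
    simp_rw [hx, integral_conj, h, map_zero]
  have hlin : ∀ (L : StrongDual ℝ E) (a b : ℂ),
      ∫ x, cexp (L x * I) * (a * w x + b * conj (w x)) ∂μ = 0 := fun L a b => by
    simp_rw [mul_add, mul_left_comm _ a, mul_left_comm _ b]
    rw [integral_add, integral_const_mul, integral_const_mul, h, hconj, mul_zero, mul_zero,
      add_zero]
    · exact (hw.char_mul L).const_mul a
    · exact ((conjCLE.toContinuousLinearMap.integrable_comp hw).char_mul L).const_mul b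
  have hre := ae_eq_zero_of_forall_integral_char_mul_ofReal_eq_zero (g := fun x => (w x).re)
    hw.re fun L => by
      convert hlin L (1 / 2) (1 / 2) using 3 with x
      rw [re_eq_add_conj]
      ring
  have him := ae_eq_zero_of_forall_integral_char_mul_ofReal_eq_zero (g := fun x => (w x).im)
    hw.im fun L => by
      convert hlin L (1 / (2 * I)) (-1 / (2 * I)) using 3 with x
      rw [im_eq_sub_conj]
      ring
  filter_upwards [hre, him] with x hxre hxim
  exact Complex.ext hxre hxim

end FourierUniqueness

theorem ae_eq_zero_of_forall_integral_cexp_mul_eq_zero {ι : Type*} [Fintype ι]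
    {ν : Measure (ι → ℝ)} {w : (ι → ℝ) → ℂ} (hw : Integrable w ν)
    (h : ∀ ξ : ι → ℝ, ∫ x, cexp (-I * ∑ i, (ξ i : ℂ) * (x i : ℂ)) * w x ∂ν = 0) :
    w =ᵐ[ν] 0 := by
  classical
  refine ae_eq_zero_of_forall_integral_char_mul_eq_zero hw fun L => ?_
  have hL : ∀ x, (L x : ℂ) * I
      = -I * ∑ i, ((-L (fun j => if i = j then 1 else 0) : ℝ) : ℂ) * (x i : ℂ) := fun x => by
    rw [← L.coe_coe, L.toLinearMap.pi_apply_eq_sum_univ x]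
    push_cast
    rw [sum_mul, mul_sum]
    refine sum_congr rfl fun i _ => ?_
    rw [smul_eq_mul, ofReal_mul]
    ring
  simp_rw [hL]
  exact h _

lemma pd_const_mul_cexp {m : ℕ} (ℓ : (Fin m → ℝ) →L[ℝ] ℂ) (c : ℂ) (j : Fin m) :
    pd j (fun x => c * cexp (ℓ x)) = fun x => c * ℓ (Pi.single j 1) * cexp (ℓ x) := by
  funext x
  rw [pd, ((ℓ.hasFDerivAt.cexp).const_mul c).fderiv]
  simp only [FunLike.coe_smul, Pi.smul_apply, smul_eq_mul]
  ring

lemma isHarmC_cexp {m : ℕ} (ℓ : (Fin m → ℝ) →L[ℝ] ℂ) (hℓ : ∑ j, ℓ (Pi.single j 1) ^ 2 = 0) :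
    IsHarmC fun x => cexp (ℓ x) := by
  refine ⟨by fun_prop, fun x => ?_⟩
  have hpd : ∀ j, pd j (pd j fun x => cexp (ℓ x)) x = ℓ (Pi.single j 1) ^ 2 * cexp (ℓ x) := by
    intro j
    have h1 := pd_const_mul_cexp ℓ 1 j
    simp only [one_mul] at h1
    rw [h1, pd_const_mul_cexp]
    ring
  simp_rw [hpd, ← sum_mul, hℓ, zero_mul]

lemma isHarmC_cexp_sum_mul {m : ℕ} {a : Fin m → ℂ} (ha : ∑ j, a j ^ 2 = 0) :
    IsHarmC fun x : Fin m → ℝ => cexp (∑ j, a j * x j) := by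
  have h := isHarmC_cexp (∑ j, a j • ofRealCLM.comp (ContinuousLinearMap.proj j)) (by
    simpa [Pi.single_apply, apply_ite Complex.ofReal] using ha)
  simpa [mul_comm] using h

theorem exists_inner_eq_zero_norm_eq {E : Type*} [NormedAddCommGroup E] [InnerProductSpace ℝ E]
    [FiniteDimensional ℝ E] (hE : 2 ≤ Module.finrank ℝ E) (x : E) :
    ∃ y : E, inner ℝ x y = 0 ∧ ‖y‖ = ‖x‖ := by
  rcases eq_or_ne x 0 with rfl | hx
  · exact ⟨0, by simp⟩
  have hrank := (ℝ ∙ x).finrank_add_finrank_orthogonal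
  rw [finrank_span_singleton hx] at hrank
  have hne : (ℝ ∙ x)ᗮ ≠ ⊥ := fun hbot => by
    rw [← Submodule.finrank_eq_zero] at hbot
    omega
  obtain ⟨z, hz, hz0⟩ := Submodule.exists_mem_ne_zero_of_ne_bot hne
  refine ⟨(‖x‖ / ‖z‖) • z, ?_, ?_⟩
  · rw [inner_smul_right, (Submodule.mem_orthogonal_singleton_iff_inner_right).1 hz, mul_zero]
  · rw [norm_smul, norm_div, norm_norm, norm_norm, div_mul_cancel₀ _ (norm_ne_zero_iff.2 hz0)]

theorem exists_sum_mul_eq_zero_sum_sq_eq {n : ℕ} (hn : 2 ≤ n) (ξ : Fin n → ℝ) :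
    ∃ η : Fin n → ℝ, ∑ i, ξ i * η i = 0 ∧ ∑ i, η i ^ 2 = ∑ i, ξ i ^ 2 := by
  obtain ⟨y, horth, hnorm⟩ :=
    exists_inner_eq_zero_norm_eq (by simpa using hn) (WithLp.toLp 2 ξ : EuclideanSpace ℝ (Fin n))
  refine ⟨y, ?_, ?_⟩
  · simpa [PiLp.inner_apply, mul_comm] using horth
  · have := congrArg (· ^ 2) hnorm
    simpa [EuclideanSpace.norm_sq_eq] using this

theorem sum_sq_half_neg_I_mul_add_eq_zero {n : ℕ} {ξ η : Fin n → ℝ}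
    (horth : ∑ i, ξ i * η i = 0) (hnorm : ∑ i, η i ^ 2 = ∑ i, ξ i ^ 2) {s : ℂ} (hs : s ^ 2 = 1) :
    ∑ j, ((-I * ξ j + s * η j) / 2) ^ 2 = 0 := by
  have horth' : ∑ i, (ξ i : ℂ) * η i = 0 := by exact_mod_cast congrArg ofReal horth
  have hnorm' : ∑ i, (η i : ℂ) ^ 2 = ∑ i, (ξ i : ℂ) ^ 2 := by exact_mod_cast congrArg ofReal hnorm
  calc ∑ j, ((-I * ξ j + s * η j) / 2) ^ 2
      = ∑ j, (s ^ 2 * (η j : ℂ) ^ 2 - (ξ j : ℂ) ^ 2 - 2 * I * s * (ξ j * η j)) / 4 :=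
        sum_congr rfl fun j _ => by linear_combination ((ξ j : ℂ) ^ 2 / 4) * I_sq
    _ = (s ^ 2 * ∑ j, (η j : ℂ) ^ 2 - ∑ j, (ξ j : ℂ) ^ 2
          - 2 * I * s * ∑ j, (ξ j : ℂ) * η j) / 4 := by
        simp only [← sum_div, sum_sub_distrib, mul_sum]
    _ = 0 := by rw [hs, hnorm', horth']; ring

theorem exists_isHarmC_mul_eq_cexp {n : ℕ} (hn : 2 ≤ n) (ξ : Fin n → ℝ) :
    ∃ u₁ u₂ : (Fin n → ℝ) → ℂ, IsHarmC u₁ ∧ IsHarmC u₂ ∧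
      ∀ x, u₁ x * u₂ x = cexp (-I * ∑ i, (ξ i : ℂ) * (x i : ℂ)) := by
  obtain ⟨η, horth, hnorm⟩ := exists_sum_mul_eq_zero_sum_sq_eq hn ξ
  have hnull (s : ℂ) (hs : s ^ 2 = 1) := sum_sq_half_neg_I_mul_add_eq_zero horth hnorm hs
  refine ⟨_, _, isHarmC_cexp_sum_mul (hnull 1 (one_pow 2)),
    isHarmC_cexp_sum_mul (hnull (-1) (by norm_num)), fun x => ?_⟩
  rw [← exp_add, ← sum_add_distrib, mul_sum]
  refine congrArg cexp (sum_congr rfl fun i _ => ?_)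
  ring

/-- The complex measure `μ` of the paper is `w dν`, with `w` integrable against `ν`. -/
theorem stmt15_general (n : ℕ) (hn : 2 ≤ n) (ν : Measure (Fin n → ℝ))
    (w : (Fin n → ℝ) → ℂ) (hw : Integrable w ν) :
    ((∀ ξ : Fin n → ℝ,
        ∫ x, Complex.exp (-Complex.I * ∑ i, (ξ i : ℂ) * (x i : ℂ)) * w x ∂ν = 0) →
      w =ᵐ[ν] 0)
    ∧ ((∀ u₁ u₂ : (Fin n → ℝ) → ℂ, IsHarmC u₁ → IsHarmC u₂ →
        ∫ x, u₁ x * u₂ x * w x ∂ν = 0) →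
      w =ᵐ[ν] 0) := by
  refine ⟨ae_eq_zero_of_forall_integral_cexp_mul_eq_zero hw, fun h =>
    ae_eq_zero_of_forall_integral_cexp_mul_eq_zero hw fun ξ => ?_⟩
  obtain ⟨u₁, u₂, hu₁, hu₂, hu⟩ := exists_isHarmC_mul_eq_cexp hn ξ
  simpa only [hu] using h u₁ u₂ hu₁ hu₂

/-- A finite complex measure is represented as `w dν` with `ν` a finite positive measure
and `w` an integrable complex density (Radon–Nikodym). -/
theorem stmt15 (n : ℕ) (hn : 2 ≤ n) (ν : Measure (Fin n → ℝ)) [IsFiniteMeasure ν]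
    (K : Set (Fin n → ℝ)) (hK : IsCompact K) (hνK : ν Kᶜ = 0)
    (w : (Fin n → ℝ) → ℂ) (hw : Integrable w ν) :
    ((∀ ξ : Fin n → ℝ,
        ∫ x, Complex.exp (-Complex.I * ∑ i, (ξ i : ℂ) * (x i : ℂ)) * w x ∂ν = 0) →
      w =ᵐ[ν] 0)
    ∧ ((∀ u₁ u₂ : (Fin n → ℝ) → ℂ, IsHarmC u₁ → IsHarmC u₂ →
        ∫ x, u₁ x * u₂ x * w x ∂ν = 0) →
      w =ᵐ[ν] 0) :=
  stmt15_general n hn ν w hw
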